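/- Let u : ℝ² → ℝ be smooth in (x,y) and let A₁, A₂, A₃ ∈ ℝ. Define φ := A₁(x u_x − y u_y) + A₂ u_x + A₃ u_y. Then the pointwise identity φ_xy − φ cos u = (A₁ x + A₂) D_x(u_xy − sin u) + (A₃ − A₁ y) D_y(u_xy − sin u) holds, where D_x, D_y denote partial differentiation in x and y. Hence the sine-Gordon equation u_xy = sin u is nonlinearly self-adjoint with the differential substitution v = φ. -/

import Mathlib

noncomputable def Dx (u : ℝ → ℝ → ℝ) : ℝ → ℝ → ℝ := fun x y => deriv (fun s => u s y) x
noncomputable def Dy (u : ℝ → ℝ → ℝ) : ℝ → ℝ → ℝ := fun x y => deriv (fun s => u x s) y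

def Smooth2 (u : ℝ → ℝ → ℝ) : Prop := ContDiff ℝ (⊤ : ℕ∞) (fun p : ℝ × ℝ => u p.1 p.2)

noncomputable def px (G : ℝ × ℝ → ℝ) : ℝ × ℝ → ℝ := fun p => fderiv ℝ G p (1, 0)
noncomputable def py (G : ℝ × ℝ → ℝ) : ℝ × ℝ → ℝ := fun p => fderiv ℝ G p (0, 1)

lemma secx {G : ℝ × ℝ → ℝ} (hG : Differentiable ℝ G) (x y : ℝ) :
    HasDerivAt (fun s => G (s, y)) (px G (x, y)) x :=
  (hG (x, y)).hasFDerivAt.comp_hasDerivAt x (HasDerivAt.prodMk (hasDerivAt_id x) (hasDerivAt_const x y))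

lemma secy {G : ℝ × ℝ → ℝ} (hG : Differentiable ℝ G) (x y : ℝ) :
    HasDerivAt (fun t => G (x, t)) (py G (x, y)) y :=
  (hG (x, y)).hasFDerivAt.comp_hasDerivAt y (HasDerivAt.prodMk (hasDerivAt_const y x) (hasDerivAt_id y))

lemma smooth_px {G : ℝ × ℝ → ℝ} (hG : ContDiff ℝ (⊤ : ℕ∞) G) : ContDiff ℝ (⊤ : ℕ∞) (px G) :=
  (hG.fderiv_right (by simp)).clm_apply contDiff_const

lemma smooth_py {G : ℝ × ℝ → ℝ} (hG : ContDiff ℝ (⊤ : ℕ∞) G) : ContDiff ℝ (⊤ : ℕ∞) (py G) :=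
  (hG.fderiv_right (by simp)).clm_apply contDiff_const

lemma px_py_comm {G : ℝ × ℝ → ℝ} (hG : ContDiff ℝ (⊤ : ℕ∞) G) : py (px G) = px (py G) := by
  funext p
  have hd : ∀ q, HasFDerivAt G (fderiv ℝ G q) q :=
    fun q => (hG.differentiable (by simp) q).hasFDerivAt
  have hf' : ContDiff ℝ (⊤ : ℕ∞) (fderiv ℝ G) := hG.fderiv_right (by simp)
  have hf'' : HasFDerivAt (fderiv ℝ G) (fderiv ℝ (fderiv ℝ G) p) p :=
    (hf'.differentiable (by simp) p).hasFDerivAt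
  have e1 : py (px G) p = fderiv ℝ (fderiv ℝ G) p ((0 : ℝ), (1 : ℝ)) (1, 0) := by
    have h : HasFDerivAt (px G)
        ((ContinuousLinearMap.apply ℝ ℝ (((1 : ℝ), (0 : ℝ)))).comp
          (fderiv ℝ (fderiv ℝ G) p)) p :=
      (ContinuousLinearMap.apply ℝ ℝ (((1 : ℝ), (0 : ℝ)))).hasFDerivAt.comp p hf''
    simp [py, h.fderiv]
  have e2 : px (py G) p = fderiv ℝ (fderiv ℝ G) p ((1 : ℝ), (0 : ℝ)) (0, 1) := by
    have h : HasFDerivAt (py G)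
        ((ContinuousLinearMap.apply ℝ ℝ (((0 : ℝ), (1 : ℝ)))).comp
          (fderiv ℝ (fderiv ℝ G) p)) p :=
      (ContinuousLinearMap.apply ℝ ℝ (((0 : ℝ), (1 : ℝ)))).hasFDerivAt.comp p hf''
    simp [px, h.fderiv]
  rw [e1, e2, second_derivative_symmetric hd hf'' _ _]

theorem sg_general (U : ℝ × ℝ → ℝ) (hU : ContDiff ℝ (⊤ : ℕ∞) U) (A₁ A₂ A₃ x y : ℝ) :
    Dx (Dy (fun a b =>
          A₁ * (a * Dx (fun a b => U (a, b)) a b - b * Dy (fun a b => U (a, b)) a b)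
            + A₂ * Dx (fun a b => U (a, b)) a b + A₃ * Dy (fun a b => U (a, b)) a b)) x y
      - (A₁ * (x * Dx (fun a b => U (a, b)) x y - y * Dy (fun a b => U (a, b)) x y)
            + A₂ * Dx (fun a b => U (a, b)) x y + A₃ * Dy (fun a b => U (a, b)) x y)
          * Real.cos (U (x, y))
    = (A₁ * x + A₂) * Dx (fun a b =>
        Dx (Dy (fun a b => U (a, b))) a b - Real.sin (U (a, b))) x y
      + (A₃ - A₁ * y) * Dy (fun a b =>
        Dx (Dy (fun a b => U (a, b))) a b - Real.sin (U (a, b))) x y := by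
  have hUd : Differentiable ℝ U := hU.differentiable (by simp)
  have hU1 : ContDiff ℝ (⊤ : ℕ∞) (px U) := smooth_px hU
  have hU2 : ContDiff ℝ (⊤ : ℕ∞) (py U) := smooth_py hU
  have hU1d : Differentiable ℝ (px U) := hU1.differentiable (by simp)
  have hU2d : Differentiable ℝ (py U) := hU2.differentiable (by simp)
  have hU12d : Differentiable ℝ (py (px U)) := (smooth_py hU1).differentiable (by simp)
  have hU21d : Differentiable ℝ (px (py U)) := (smooth_px hU2).differentiable (by simp)
  have hU22d : Differentiable ℝ (py (py U)) := (smooth_py hU2).differentiable (by simp)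
  have F1 : Dx (fun a b => U (a, b)) = fun a b => px U (a, b) :=
    funext fun a => funext fun b => (secx hUd a b).deriv
  have F2 : Dy (fun a b => U (a, b)) = fun a b => py U (a, b) :=
    funext fun a => funext fun b => (secy hUd a b).deriv
  have F3 : Dx (fun a b => py U (a, b)) = fun a b => px (py U) (a, b) :=
    funext fun a => funext fun b => (secx hU2d a b).deriv
  simp only [F1, F2, F3]
  have F4 : Dy (fun a b => A₁ * (a * px U (a, b) - b * py U (a, b))
        + A₂ * px U (a, b) + A₃ * py U (a, b))
      = fun a b => A₁ * (a * py (px U) (a, b)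
          - (1 * py U (a, b) + b * py (py U) (a, b)))
        + A₂ * py (px U) (a, b) + A₃ * py (py U) (a, b) := by
    funext a b
    have h1 := secy hU1d a b
    have h2 := secy hU2d a b
    exact ((((h1.const_mul a).sub ((hasDerivAt_id b).mul h2)).const_mul A₁).add
      (h1.const_mul A₂)).add (h2.const_mul A₃) |>.deriv
  simp only [F4]
  have F5 : Dx (fun a b => A₁ * (a * py (px U) (a, b)
          - (1 * py U (a, b) + b * py (py U) (a, b)))
        + A₂ * py (px U) (a, b) + A₃ * py (py U) (a, b)) x y
      = A₁ * ((1 * py (px U) (x, y) + x * px (py (px U)) (x, y))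
          - (1 * px (py U) (x, y) + y * px (py (py U)) (x, y)))
        + A₂ * px (py (px U)) (x, y) + A₃ * px (py (py U)) (x, y) := by
    have g1 := secx hU12d x y
    have g2 := secx hU2d x y
    have g3 := secx hU22d x y
    exact (((((hasDerivAt_id x).mul g1).sub
        ((g2.const_mul 1).add (g3.const_mul y))).const_mul A₁).add
      (g1.const_mul A₂)).add (g3.const_mul A₃) |>.deriv
  have F6 : Dx (fun a b => px (py U) (a, b) - Real.sin (U (a, b))) x y
      = px (px (py U)) (x, y) - Real.cos (U (x, y)) * px U (x, y) :=
    by have h := ((secx hU21d x y).sub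
      ((Real.hasDerivAt_sin (U (x, y))).comp x (secx hUd x y))).deriv; exact h
  have F7 : Dy (fun a b => px (py U) (a, b) - Real.sin (U (a, b))) x y
      = py (px (py U)) (x, y) - Real.cos (U (x, y)) * py U (x, y) :=
    by have h := ((secy hU21d x y).sub
      ((Real.hasDerivAt_sin (U (x, y))).comp y (secy hUd x y))).deriv; exact h
  rw [F5, F6, F7, px_py_comm hU, px_py_comm hU2]
  ring

theorem sine_gordon_differential_substitution (u : ℝ → ℝ → ℝ) (hu : Smooth2 u)
    (A₁ A₂ A₃ : ℝ) :
    ∀ x y : ℝ,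
      Dx (Dy (fun x y =>
            A₁ * (x * Dx u x y - y * Dy u x y) + A₂ * Dx u x y + A₃ * Dy u x y)) x y
        - (A₁ * (x * Dx u x y - y * Dy u x y) + A₂ * Dx u x y + A₃ * Dy u x y)
            * Real.cos (u x y)
      = (A₁ * x + A₂) * Dx (fun x y => Dx (Dy u) x y - Real.sin (u x y)) x y
        + (A₃ - A₁ * y) * Dy (fun x y => Dx (Dy u) x y - Real.sin (u x y)) x y := by
  intro x y
  exact sg_general (fun p => u p.1 p.2) hu A₁ A₂ A₃ x y
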